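/- arXiv:1903.10813 — 4 statements merged into one kernel-verified Lean document; each statement's English description precedes it below -/
import Mathlib

section
/- Let Ω ⊆ ℝ³ be a simply connected open set and let A be a symmetric-tensor-valued distribution on Ω (A_{ij} = A_{ji}). Assume the Poincaré lemma for distributions: every curl-free vector-valued distribution on Ω is the gradient of a scalar distribution. Then Curl Curl A = 0 (i.e., ε_{ilk} ε_{jmn} ∂_l ∂_m A_{kn} = 0 for all i,j) if and only if there exists a vector-valued distribution U on Ω with A_{ij} = (1/2)(∂_j U_i + ∂_i U_j). -/
noncomputable section

/-- Points of ℝ³. -/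
abbrev E3 := Fin 3 → ℝ

/-- Test functions: compactly supported smooth functions with support in Ω. -/
def IsTest (Ω : Set E3) (φ : E3 → ℝ) : Prop :=
  ContDiff ℝ (⊤ : ℕ∞) φ ∧ HasCompactSupport φ ∧ tsupport φ ⊆ Ω

/-- A (scalar) distribution, viewed as a functional on test functions. -/
abbrev Distrib3 := (E3 → ℝ) → ℝ

/-- Classical partial derivative of a function in the i-th coordinate direction. -/
def pderiv3 (i : Fin 3) (f : E3 → ℝ) : E3 → ℝ :=
  fun x => fderiv ℝ f x (Pi.single i 1)

/-- Distributional partial derivative: (∂ᵢ T)(φ) = − T(∂φ/∂xᵢ). -/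
def distDeriv (i : Fin 3) (T : Distrib3) : Distrib3 :=
  fun φ => - T (pderiv3 i φ)

/-- The alternating (Levi-Civita) symbol ε_{ijk} on indices in Fin 3. -/
def eps (i j k : Fin 3) : ℝ :=
  (((i : ℕ) : ℝ) - ((j : ℕ) : ℝ)) * (((j : ℕ) : ℝ) - ((k : ℕ) : ℝ)) *
    (((k : ℕ) : ℝ) - ((i : ℕ) : ℝ)) / 2

/-- Curl–Curl of a tensor-valued distribution:
(Curl Curl A)_{ij} = ε_{ilk} ε_{jmn} ∂_l ∂_m A_{kn}. -/
def curlCurl (A : Fin 3 → Fin 3 → Distrib3) (i j : Fin 3) : Distrib3 :=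
  fun φ => ∑ l, ∑ k, ∑ m, ∑ n, eps i l k * eps j m n *
    distDeriv l (distDeriv m (A k n)) φ

/- ### Auxiliary lemmas -/

lemma contDiff_pderiv3 {φ : E3 → ℝ} (hφ : ContDiff ℝ (⊤ : ℕ∞) φ) (i : Fin 3) :
    ContDiff ℝ (⊤ : ℕ∞) (pderiv3 i φ) := by
  have h1 : ContDiff ℝ (⊤ : ℕ∞) (fderiv ℝ φ) := hφ.fderiv_right (by simp)
  exact (ContinuousLinearMap.apply ℝ ℝ (Pi.single i 1)).contDiff.comp h1

lemma tsupport_pderiv3 {φ : E3 → ℝ} (i : Fin 3) :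
    tsupport (pderiv3 i φ) ⊆ tsupport φ := by
  apply closure_minimal _ isClosed_closure
  intro x hx
  have : fderiv ℝ φ x ≠ 0 := by
    intro h; apply hx; simp [pderiv3, h]
  exact support_fderiv_subset ℝ this

lemma isTest_pderiv3 {Ω : Set E3} {φ : E3 → ℝ} (h : IsTest Ω φ) (i : Fin 3) :
    IsTest Ω (pderiv3 i φ) := by
  refine ⟨contDiff_pderiv3 h.1 i, ?_, (tsupport_pderiv3 i).trans h.2.2⟩
  exact IsCompact.of_isClosed_subset h.2.1 isClosed_closure (tsupport_pderiv3 i)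

lemma pderiv3_comm {φ : E3 → ℝ} (hφ : ContDiff ℝ (⊤ : ℕ∞) φ) (i j : Fin 3) :
    pderiv3 i (pderiv3 j φ) = pderiv3 j (pderiv3 i φ) := by
  funext x
  have hd : ∀ y, HasFDerivAt φ (fderiv ℝ φ y) y := fun y =>
    (hφ.differentiable (by simp) y).hasFDerivAt
  have h2 : ContDiff ℝ (⊤ : ℕ∞) (fderiv ℝ φ) := hφ.fderiv_right (by simp)
  have hx : HasFDerivAt (fderiv ℝ φ) (fderiv ℝ (fderiv ℝ φ) x) x :=
    (h2.differentiable (by simp) x).hasFDerivAt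
  have key : ∀ v w : E3, fderiv ℝ (fun y => fderiv ℝ φ y v) x w
      = fderiv ℝ (fderiv ℝ φ) x w v := by
    intro v w
    have := fderiv_clm_apply (c := fderiv ℝ φ) (u := fun _ => v)
      (h2.differentiable (by simp) x) (differentiableAt_const v)
    rw [show (fun y => fderiv ℝ φ y v) = (fun y => (fderiv ℝ φ y) ((fun _ : E3 => v) y)) from rfl,
      this]
    simp
  show fderiv ℝ (fun y => fderiv ℝ φ y (Pi.single j 1)) x (Pi.single i 1) = _
  rw [key, second_derivative_symmetric hd hx _ _, ← key]
  rfl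

lemma eps_swap1 (i j k : Fin 3) : eps j i k = - eps i j k := by unfold eps; ring
lemma eps_swap2 (i j k : Fin 3) : eps i k j = - eps i j k := by unfold eps; ring
lemma eps_diag1 (i j : Fin 3) : eps i i j = 0 := by unfold eps; ring
lemma eps_diag2 (i j : Fin 3) : eps i j j = 0 := by unfold eps; ring
lemma eps_diag3 (i j : Fin 3) : eps i j i = 0 := by unfold eps; ring
lemma e10 (i : Fin 3) : eps i 1 0 = - eps i 0 1 := eps_swap2 i 0 1
lemma e20 (i : Fin 3) : eps i 2 0 = - eps i 0 2 := eps_swap2 i 0 2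
lemma e21 (i : Fin 3) : eps i 2 1 = - eps i 1 2 := eps_swap2 i 1 2
lemma finmk0 (h : 0 < 3) : (⟨0, h⟩ : Fin 3) = 0 := rfl
lemma finmk1 (h : 1 < 3) : (⟨1, h⟩ : Fin 3) = 1 := rfl
lemma finmk2 (h : 2 < 3) : (⟨2, h⟩ : Fin 3) = 2 := rfl

set_option maxHeartbeats 1600000 in
/-- on a simply connected open Ω ⊆ ℝ³, assuming the Poincaré lemma for
distributions (every curl-free vector-valued distribution is a gradient), a symmetric
tensor-valued distribution A satisfies Curl Curl A = 0 iff A is the symmetrized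
gradient of some vector-valued distribution U. -/
theorem strain_compatibility_distributions
    (Ω : Set E3) (hΩ : IsOpen Ω) (hSC : SimplyConnectedSpace Ω)
    (A : Fin 3 → Fin 3 → Distrib3) (hAsym : ∀ i j, A i j = A j i)
    (hPoincare : ∀ W : Fin 3 → Distrib3,
      (∀ i, ∀ φ, IsTest Ω φ → (∑ j, ∑ k, eps i j k * distDeriv j (W k) φ) = 0) →
      ∃ U : Distrib3, ∀ i, ∀ φ, IsTest Ω φ → W i φ = distDeriv i U φ) :
    (∀ i j, ∀ φ, IsTest Ω φ → curlCurl A i j φ = 0) ↔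
    (∃ U : Fin 3 → Distrib3, ∀ i j, ∀ φ, IsTest Ω φ →
      A i j φ = (1/2) * (distDeriv j (U i) φ + distDeriv i (U j) φ)) := by
  constructor
  · -- hard direction
    intro h
    -- Step 1: the row-wise curl of A is a gradient
    have hex : ∀ i, ∃ P : Distrib3, ∀ n φ, IsTest Ω φ →
        (-(∑ l, ∑ k, eps i l k * A k n (pderiv3 l φ))) = distDeriv n P φ := by
      intro i
      apply hPoincare (fun n φ => -(∑ l, ∑ k, eps i l k * A k n (pderiv3 l φ)))
      intro q φ hφ
      have h' := h i q φ hφ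
      have hc := hφ.1
      have C10 := pderiv3_comm hc 1 0
      have C20 := pderiv3_comm hc 2 0
      have C21 := pderiv3_comm hc 2 1
      simp only [curlCurl, distDeriv, neg_neg, Fin.sum_univ_three] at h'
      simp only [distDeriv, neg_neg, Fin.sum_univ_three]
      simp only [C10, C20, C21] at h' ⊢
      linear_combination h'
    choose p hp using hex
    -- Step 2: trace of the curl is zero, i.e. divergence of p vanishes
    have htr : ∀ φ, IsTest Ω φ →
        p 0 (pderiv3 0 φ) + p 1 (pderiv3 1 φ) + p 2 (pderiv3 2 φ) = 0 := by
      intro φ hφ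
      have h0 := hp 0 0 φ hφ
      have h1 := hp 1 1 φ hφ
      have h2 := hp 2 2 φ hφ
      simp only [distDeriv, Fin.sum_univ_three] at h0 h1 h2
      simp only [hAsym 1 0, hAsym 2 0, hAsym 2 1] at h0 h1 h2
      norm_num [eps] at h0 h1 h2
      linarith
    -- Step 3: A corrected by an antisymmetric tensor is row-wise a gradient
    have hex2 : ∀ k, ∃ Uk : Distrib3, ∀ n φ, IsTest Ω φ →
        (A k n φ - ∑ m, eps k n m * p m φ) = distDeriv n Uk φ := by
      intro k
      apply hPoincare (fun n φ => A k n φ - ∑ m, eps k n m * p m φ)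
      intro q φ hφ
      have hpk := hp q k φ hφ
      have htr' := htr φ hφ
      fin_cases q <;> fin_cases k <;>
      · simp only [distDeriv, Fin.sum_univ_three, finmk0, finmk1, finmk2] at hpk ⊢
        norm_num [eps, hAsym 1 0, hAsym 2 0, hAsym 2 1] at hpk ⊢
        linarith
    choose U hU using hex2
    refine ⟨U, fun i j φ hφ => ?_⟩
    have h1 : A i j φ - ∑ m, eps i j m * p m φ = distDeriv j (U i) φ := hU i j φ hφ
    have h2 : A j i φ - ∑ m, eps j i m * p m φ = distDeriv i (U j) φ := hU j i φ hφ
    rw [hAsym j i] at h2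
    rw [← h1, ← h2]
    simp only [Fin.sum_univ_three]
    linear_combination (p 0 φ * eps_swap1 i j 0 + p 1 φ * eps_swap1 i j 1
      + p 2 φ * eps_swap1 i j 2) / 2
  · -- easy direction
    rintro ⟨U, hU⟩ i j φ hφ
    have hc := hφ.1
    have hc0 := contDiff_pderiv3 hc 0
    have hc1 := contDiff_pderiv3 hc 1
    have hc2 := contDiff_pderiv3 hc 2
    have C10 := pderiv3_comm hc 1 0
    have C20 := pderiv3_comm hc 2 0
    have C21 := pderiv3_comm hc 2 1
    have hU' : ∀ k n m l, A k n (pderiv3 m (pderiv3 l φ)) =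
        -(1/2) * (U k (pderiv3 n (pderiv3 m (pderiv3 l φ)))
          + U n (pderiv3 k (pderiv3 m (pderiv3 l φ)))) := by
      intro k n m l
      have hh := hU k n (pderiv3 m (pderiv3 l φ)) (isTest_pderiv3 (isTest_pderiv3 hφ l) m)
      simp only [distDeriv] at hh
      rw [hh]; ring
    show curlCurl A i j φ = 0
    simp only [curlCurl, distDeriv, neg_neg, Fin.sum_univ_three]
    simp only [eps_diag1, eps_diag2, eps_diag3, e10, e20, e21, zero_mul, mul_zero, neg_zero,
      add_zero, zero_add]
    simp only [hU']
    simp only [C10, C20, C21,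
      pderiv3_comm hc0 1 0, pderiv3_comm hc0 2 0, pderiv3_comm hc0 2 1,
      pderiv3_comm hc1 1 0, pderiv3_comm hc1 2 0, pderiv3_comm hc1 2 1,
      pderiv3_comm hc2 1 0, pderiv3_comm hc2 2 0, pderiv3_comm hc2 2 1]
    ring
end
end

section
/- In the proof of the distributional strain compatibility theorem: if A is a symmetric tensor-valued distribution on simply connected Ω ⊆ ℝ³ with Curl Curl A = 0, and H_{ijk} := ∂_j A_{ik} − ∂_i A_{jk}, then ∂_l H_{ijk} − ∂_k H_{ijl} = 0 for all indices i,j,k,l. -/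
noncomputable section

/-- The auxiliary distribution H_{ijk} = ∂_j A_{ik} − ∂_i A_{jk}. -/
def Hten (A : Fin 3 → Fin 3 → Distrib3) (i j k : Fin 3) : Distrib3 :=
  fun ψ => distDeriv j (A i k) ψ - distDeriv i (A j k) ψ

lemma schwarz3 {f : E3 → ℝ} (hf : ContDiff ℝ (⊤ : ℕ∞) f) (a b : Fin 3) :
    pderiv3 a (pderiv3 b f) = pderiv3 b (pderiv3 a f) := by
  funext x
  have hf' : ContDiff ℝ ((⊤ : ℕ∞) : WithTop ℕ∞) f := hf.of_le (by simp)
  have hdf : Differentiable ℝ (fderiv ℝ f) :=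
    (contDiff_infty_iff_fderiv.mp hf').2.differentiable (by simp)
  have h : ∀ (c : Fin 3), ∀ x, fderiv ℝ (pderiv3 c f) x
      = (fderiv ℝ (fderiv ℝ f) x).flip (Pi.single c 1) := by
    intro c x
    have := fderiv_clm_apply (c := fderiv ℝ f) (u := fun _ => (Pi.single c 1 : E3))
      (hdf x) (differentiableAt_const _)
    rw [show pderiv3 c f = fun y => fderiv ℝ f y (Pi.single c 1) from rfl]
    simpa using this
  have hsymm : fderiv ℝ (fderiv ℝ f) x (Pi.single a 1) (Pi.single b 1)
      = fderiv ℝ (fderiv ℝ f) x (Pi.single b 1) (Pi.single a 1) :=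
    ((hf.contDiffAt (x := x)).isSymmSndFDerivAt (n := (⊤ : ℕ∞))
      (by rw [minSmoothness_of_isRCLikeNormedField]; exact WithTop.coe_le_coe.mpr le_top)) _ _
  simp [pderiv3, h, hsymm]

set_option maxHeartbeats 2000000 in
/-- if A is symmetric and Curl Curl A = 0, then with
H_{ijk} = ∂_j A_{ik} − ∂_i A_{jk} one has ∂_l H_{ijk} − ∂_k H_{ijl} = 0. -/
theorem H_closedness_from_curl_curl
    (Ω : Set E3) (hΩ : IsOpen Ω)
    (A : Fin 3 → Fin 3 → Distrib3) (hAsym : ∀ i j, A i j = A j i)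
    (hcc : ∀ i j, ∀ φ, IsTest Ω φ → curlCurl A i j φ = 0)
    (i j k l : Fin 3) (φ : E3 → ℝ) (hφ : IsTest Ω φ) :
    distDeriv l (Hten A i j k) φ - distDeriv k (Hten A i j l) φ = 0 := by
  have hsm : ContDiff ℝ (⊤ : ℕ∞) φ := hφ.1
  have c10 := schwarz3 hsm 1 0
  have c20 := schwarz3 hsm 2 0
  have c21 := schwarz3 hsm 2 1
  have a10 : A 1 0 = A 0 1 := hAsym 1 0
  have a20 : A 2 0 = A 0 2 := hAsym 2 0
  have a21 : A 2 1 = A 1 2 := hAsym 2 1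
  have h00 := hcc 0 0 φ hφ
  have h01 := hcc 0 1 φ hφ
  have h02 := hcc 0 2 φ hφ
  have h10 := hcc 1 0 φ hφ
  have h11 := hcc 1 1 φ hφ
  have h12 := hcc 1 2 φ hφ
  have h20 := hcc 2 0 φ hφ
  have h21 := hcc 2 1 φ hφ
  have h22 := hcc 2 2 φ hφ
  simp only [curlCurl, Fin.sum_univ_three, distDeriv, neg_neg] at h00 h01 h02 h10 h11 h12 h20 h21 h22
  norm_num [eps] at h00 h01 h02 h10 h11 h12 h20 h21 h22
  simp only [c10, c20, c21, a10, a20, a21] at h00 h01 h02 h10 h11 h12 h20 h21 h22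
  simp only [Hten, distDeriv, neg_neg, neg_sub]
  have e0 : ∀ (h : 0 < 3), (⟨0, h⟩ : Fin 3) = 0 := fun _ => rfl
  have e1 : ∀ (h : 1 < 3), (⟨1, h⟩ : Fin 3) = 1 := fun _ => rfl
  have e2 : ∀ (h : 2 < 3), (⟨2, h⟩ : Fin 3) = 2 := fun _ => rfl
  fin_cases i <;> fin_cases j <;> fin_cases k <;> fin_cases l <;>
    simp only [e0, e1, e2, c10, c20, c21, a10, a20, a21] <;>
    linarith [h00, h01, h02, h10, h11, h12, h20, h21, h22]
end
end

section
/- Let v be a smooth vector field defined on a neighborhood of an oriented regular surface S ⊂ ℝ³ with unit normal n, and let v_S denote its restriction to S. Then the surface curl satisfies curl_S v_S = (∂v/∂n) × n + curl v on S, where ∂v/∂n = (∇v)n; in particular, the right-hand side is independent of the choice of smooth extension of v_S. -/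
open Matrix

noncomputable section

/-- The axial vector of (the skew part of) a matrix: ax(M)_i = −(1/2) ε_{ijk} M_{jk};
for skew M it satisfies M x = ax(M) × x. -/
def axial (M : Matrix (Fin 3) (Fin 3) ℝ) : E3 :=
  fun i => -(1/2) * ∑ j, ∑ k, eps i j k * M j k

/-- The gradient (Jacobian) matrix of a vector field: (∇v)_{ij} = ∂_j v_i. -/
def gradM (v : E3 → E3) (x : E3) : Matrix (Fin 3) (Fin 3) ℝ :=
  Matrix.of fun i j => fderiv ℝ (fun y => v y i) x (Pi.single j 1)

/-- The tangential projection I − n ⊗ n. -/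
def tanProj (n : E3) : Matrix (Fin 3) (Fin 3) ℝ :=
  1 - Matrix.vecMulVec n n

/-- for a smooth vector field v defined near an oriented surface S with unit
normal n, the surface curl of the restriction of v to S (the axial vector of
∇_S v − (∇_S v)ᵀ, where ∇_S v = ∇v (I − n⊗n)) satisfies
curl_S v = (∂v/∂n) × n + curl v on S, with ∂v/∂n = (∇v) n and
curl v the axial vector of ∇v − (∇v)ᵀ; in particular, the right-hand side does not
depend on the extension of v off S. -/
theorem surface_curl_of_restriction
    (U : Set E3) (hU : IsOpen U) (S : Set E3) (hSU : S ⊆ U)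
    (n : E3 → E3) (v : E3 → E3) (hv : ContDiff ℝ (⊤ : ℕ∞) v)
    (x : E3) (hx : x ∈ S) (hn : ∑ i, n x i * n x i = 1) :
    axial (gradM v x * tanProj (n x) - (gradM v x * tanProj (n x))ᵀ) =
      crossProduct ((gradM v x).mulVec (n x)) (n x) +
        axial (gradM v x - (gradM v x)ᵀ) := by
  set M := gradM v x with hM
  set N := n x with hN
  clear_value M N
  funext i
  simp only [axial, eps, tanProj, Matrix.sub_apply, Matrix.mul_apply, Matrix.transpose_apply,
    Matrix.one_apply, Matrix.vecMulVec_apply, Matrix.mulVec, dotProduct,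
    crossProduct, Pi.add_apply, LinearMap.mk₂_apply, Fin.sum_univ_three] at *
  fin_cases i <;>
    simp_all <;>
    ring_nf <;>
    linear_combination (M 0 1 * N 2 - M 0 2 * N 1 + M 1 2 * N 0 - M 1 0 * N 2 + M 2 0 * N 1 - M 2 1 * N 0) * hn
end
end

section
/- Let e_S be a symmetric 3×3 tensor and n a unit vector in ℝ³ such that ((e_S × n)^T × n)^T = 0 (equivalently, the tangential–tangential part of e_S vanishes: (I − n⊗n) e_S (I − n⊗n) = 0). Then there exists a vector g ∈ ℝ³ with e_S = (1/2)(g ⊗ n + n ⊗ g). -/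
/-! Expanding `(1 - n ⊗ n) e (1 - n ⊗ n)` for symmetric `e` gives
`e - (v ⊗ n + n ⊗ v - ⟨n, v⟩ n ⊗ n)` with `v = e n`.
So the vanishing of the tangential part says exactly that `e` is the symmetrised product of
`n` with `g = 2 e n - ⟨n, e n⟩ n`. -/

open Matrix

noncomputable section

namespace Matrix

variable {m K : Type*}

theorem one_sub_vecMulVec_self_mul_mul_one_sub_vecMulVec_self [Fintype m] [DecidableEq m]
    [CommRing K] {A : Matrix m m K} (hA : Aᵀ = A) (n : m → K) :
    (1 - vecMulVec n n) * A * (1 - vecMulVec n n) =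
      A - (vecMulVec (A *ᵥ n) n + vecMulVec n (A *ᵥ n) - (n ⬝ᵥ A *ᵥ n) • vecMulVec n n) := by
  have hnA : n ᵥ* A = A *ᵥ n := by rw [← mulVec_transpose, hA]
  simp only [sub_mul, mul_sub, one_mul, mul_one, mul_vecMulVec, vecMulVec_mul, hnA,
    vecMulVec_mulVec, op_smul_eq_smul, smul_vecMulVec, dotProduct_comm (A *ᵥ n) n]
  abel

theorem half_smul_vecMulVec_add_vecMulVec_two_smul_sub [Field K] [NeZero (2 : K)]
    (v n : m → K) (c : K) :
    (1 / 2 : K) • (vecMulVec ((2 : K) • v - c • n) n + vecMulVec n ((2 : K) • v - c • n)) =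
      vecMulVec v n + vecMulVec n v - c • vecMulVec n n := by
  simp only [sub_vecMulVec, vecMulVec_sub, smul_vecMulVec, vecMulVec_smul]
  match_scalars <;> field_simp
  ring

end Matrix

theorem tangential_free_symmetric_decomposition_general
    (e : Matrix (Fin 3) (Fin 3) ℝ) (n : E3)
    (hsym : eᵀ = e)
    (h : tanProj n * e * tanProj n = 0) :
    ∃ g : E3, e = (1/2 : ℝ) • (Matrix.vecMulVec g n + Matrix.vecMulVec n g) := by
  refine ⟨(2 : ℝ) • e *ᵥ n - (n ⬝ᵥ e *ᵥ n) • n, ?_⟩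
  rw [half_smul_vecMulVec_add_vecMulVec_two_smul_sub]
  exact sub_eq_zero.mp ((one_sub_vecMulVec_self_mul_mul_one_sub_vecMulVec_self hsym n).symm.trans h)

/-- a symmetric tensor e whose tangential–tangential part vanishes
((I − n⊗n) e (I − n⊗n) = 0 for a unit vector n) has the form
e = (1/2)(g ⊗ n + n ⊗ g) for some vector g. -/
theorem tangential_free_symmetric_decomposition
    (e : Matrix (Fin 3) (Fin 3) ℝ) (n : E3)
    (hsym : eᵀ = e) (hn : ∑ i, n i * n i = 1)
    (h : tanProj n * e * tanProj n = 0) :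
    ∃ g : E3, e = (1/2 : ℝ) • (Matrix.vecMulVec g n + Matrix.vecMulVec n g) :=
  tangential_free_symmetric_decomposition_general e n hsym h
end
end
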